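/- Every two-valued Lipschitz function u ∈ Lip(D₁; 𝒜₂(ℝ)) on the unit disc D₁ ⊂ ℝⁿ is differentiable, in the two-valued sense, at H^n-almost every point of D₁. -/

import Mathlib

open MeasureTheory Filter Metric Set
open scoped InnerProductSpace Topology ENNReal NNReal

noncomputable section

namespace TwoValued

/-- `n`-dimensional Euclidean space `ℝⁿ`. -/
abbrev Euc (n : ℕ) : Type := EuclideanSpace ℝ (Fin n)

variable {n : ℕ}

/-- The metric `𝒢` on unordered pairs of elements of a metric space:
`𝒢({a,b},{c,d}) = min (dist a c + dist b d) (dist a d + dist b c)`. -/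
def pairDist {E : Type*} [PseudoMetricSpace E] (z w : Sym2 E) : ℝ :=
  sInf {r : ℝ | ∃ a b c d, z = s(a, b) ∧ w = s(c, d) ∧ r = dist a c + dist b d}

/-- The norm of an unordered pair, `‖{a,b}‖ = ‖a‖ + ‖b‖`. -/
def pairNorm {E : Type*} [Norm E] (z : Sym2 E) : ℝ :=
  sInf {r : ℝ | ∃ a b, z = s(a, b) ∧ r = ‖a‖ + ‖b‖}

/-- The sum `g a + g b` of a function `g` over the two elements of an unordered pair. -/
def sheetSum {γ : Type*} (g : γ → ℝ) (z : Sym2 γ) : ℝ :=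
  sInf {r : ℝ | ∃ a b, z = s(a, b) ∧ r = g a + g b}

/-- The (two-valued) derivative part of joint value-derivative data. -/
def derPart {W : Type*} (F : Euc n → Sym2 (ℝ × W)) (x : Euc n) : Sym2 W :=
  Sym2.map Prod.snd (F x)

/-- A two-valued function `u` is differentiable at `x` with value-derivative data
`d = {(a,p),(b,q)}`: the value `a` comes with the gradient `p` and the value `b` with the
gradient `q`, and `𝒢(u(x+h), {a + ⟨p,h⟩, b + ⟨q,h⟩}) = o(|h|)` as `h → 0`. -/
def HasTwoDerivAt (u : Euc n → Sym2 ℝ) (x : Euc n) (d : Sym2 (ℝ × Euc n)) : Prop :=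
  ∃ a b : ℝ, ∃ p q : Euc n, u x = s(a, b) ∧ d = s((a, p), (b, q)) ∧
    (fun h : Euc n => pairDist (u (x + h)) s(a + ⟪p, h⟫_ℝ, b + ⟪q, h⟫_ℝ))
      =o[𝓝 0] fun h : Euc n => ‖h‖

/-- `u ∈ C^{1,α}(Ω; 𝒜₂(ℝ))`, with value-derivative data `F`: `u` is two-valued
differentiable at every point of `Ω` and its two-valued derivative is locally
`α`-Hölder continuous on `Ω`. -/
def IsC1Holder (α : ℝ) (Ω : Set (Euc n)) (u : Euc n → Sym2 ℝ)
    (F : Euc n → Sym2 (ℝ × Euc n)) : Prop :=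
  (∀ x ∈ Ω, HasTwoDerivAt u x (F x)) ∧
    ∀ x ∈ Ω, ∃ ε > 0, ∃ C : ℝ, ∀ y ∈ Ω ∩ ball x ε, ∀ z ∈ Ω ∩ ball x ε,
      pairDist (derPart F y) (derPart F z) ≤ C * dist y z ^ α

/-- The weak form of the minimal surface equation for a two-valued function with
value-derivative data `F`: for every `φ ∈ C¹_c(Ω)`,
`∫_Ω Σᵢ ⟨pᵢ(x), Dφ(x)⟩ (1+|pᵢ(x)|²)^{-1/2} dx = 0`. -/
def WeakMSE (Ω : Set (Euc n)) (F : Euc n → Sym2 (ℝ × Euc n)) : Prop :=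
  ∀ φ : Euc n → ℝ, ContDiff ℝ 1 φ → HasCompactSupport φ → tsupport φ ⊆ Ω →
    ∫ x in Ω,
      sheetSum (fun ap : ℝ × Euc n =>
        ⟪ap.2, gradient φ x⟫_ℝ / Real.sqrt (1 + ‖ap.2‖ ^ 2)) (F x) = 0

/-- `u` is a `C^{1,α}` two-valued minimal graph on `Ω`, with value-derivative data `F`. -/
def IsMinimalGraph (α : ℝ) (Ω : Set (Euc n)) (u : Euc n → Sym2 ℝ)
    (F : Euc n → Sym2 (ℝ × Euc n)) : Prop :=
  IsC1Holder α Ω u F ∧ WeakMSE Ω F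

/-- `u` is two-valued Lipschitz on `Ω` with Lipschitz constant `L`. -/
def PairLipschitzOn (L : ℝ) (Ω : Set (Euc n)) (u : Euc n → Sym2 ℝ) : Prop :=
  ∀ x ∈ Ω, ∀ y ∈ Ω, pairDist (u x) (u y) ≤ L * dist x y

/-- A two-valued Lipschitz function is a minimal graph: it has `H^n`-a.e. on `Ω` a
two-valued derivative (with joint value-derivative data `F`) satisfying the minimal
surface equation weakly. -/
def IsLipMinimalGraph (Ω : Set (Euc n)) (u : Euc n → Sym2 ℝ)
    (F : Euc n → Sym2 (ℝ × Euc n)) : Prop :=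
  (∀ᵐ x ∂volume, x ∈ Ω → HasTwoDerivAt u x (F x)) ∧ WeakMSE Ω F

/-- `u` is a linear two-valued function. -/
def IsLinearTwoValued (u : Euc n → Sym2 ℝ) : Prop :=
  ∃ l₁ l₂ : Euc n →L[ℝ] ℝ, ∀ x, u x = s(l₁ x, l₂ x)

/-- The graph of a two-valued function over `Ω`. -/
def graphSet (Ω : Set (Euc n)) (u : Euc n → Sym2 ℝ) : Set (Euc n × ℝ) :=
  {q | q.1 ∈ Ω ∧ q.2 ∈ u q.1}

/-- The identification `ℝⁿ × ℝ ≃ ℝ^{n+1}`. -/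
def toE (q : Euc n × ℝ) : Euc (n + 1) :=
  WithLp.toLp 2 (Fin.snoc (q.1 : Fin n → ℝ) q.2)

/-- `ω_k`, the Lebesgue measure of the unit ball of `ℝᵏ`. -/
def unitBallVol (k : ℕ) : ℝ := (volume (ball (0 : Euc k) 1)).toReal

/-- `u` admits a `C¹` selection on `S`. -/
def HasC1SelectionOn (u : Euc n → Sym2 ℝ) (S : Set (Euc n)) : Prop :=
  ∃ u₁ u₂ : Euc n → ℝ, ContDiffOn ℝ 1 u₁ S ∧ ContDiffOn ℝ 1 u₂ S ∧
    ∀ x ∈ S, u x = s(u₁ x, u₂ x)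

/-- The branch set of a two-valued function on `Ω`: points with no neighbourhood on
which `u` admits a `C¹` selection. -/
def branchSet (Ω : Set (Euc n)) (u : Euc n → Sym2 ℝ) : Set (Euc n) :=
  {x ∈ Ω | ¬ ∃ ε > 0, ball x ε ⊆ Ω ∧ HasC1SelectionOn u (ball x ε)}

/-- `u` is continuous (with respect to the metric `𝒢`) on `S`. -/
def PairContinuousOn (u : Euc n → Sym2 ℝ) (S : Set (Euc n)) : Prop :=
  ∀ x ∈ S, ∀ ε > 0, ∃ δ > 0, ∀ y ∈ S, dist y x < δ → pairDist (u y) (u x) < ε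

/-- `w = log v = log √(1+|Df|²)` for a single-valued function `f`. -/
def wFun (f : Euc n → ℝ) (x : Euc n) : ℝ :=
  Real.log (Real.sqrt (1 + ‖gradient f x‖ ^ 2))

/-- The inverse metric of the graph of `f`, applied to a vector. -/
def qProj (f : Euc n → ℝ) (x : Euc n) (v : Euc n) : Euc n :=
  v - (⟪gradient f x, v⟫_ℝ / (1 + ‖gradient f x‖ ^ 2)) • gradient f x

/-- `|A_G|²`, the squared norm of the second fundamental form of the graph of a
(single-valued) function `f`, at the point lying over `x`. -/
def secondFormSq (f : Euc n → ℝ) (x : Euc n) : ℝ :=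
  (1 / (1 + ‖gradient f x‖ ^ 2)) *
    ∑ i : Fin n,
      ⟪qProj f x ((fderiv ℝ (gradient f) x)
          (qProj f x ((fderiv ℝ (gradient f) x) (EuclideanSpace.single i (1 : ℝ))))),
        EuclideanSpace.single i (1 : ℝ)⟫_ℝ

/-- `|∇_G φ|²`: the squared norm of the tangential gradient along the sheet through
`(x,a)` with gradient `p`, of an ambient function `φ`. -/
def tanGrad2 (φ : Euc n × ℝ → ℝ) (x : Euc n) (a : ℝ) (p : Euc n) : ℝ :=
  ‖gradient (fun z => φ (z, a)) x‖ ^ 2 + deriv (fun t => φ (x, t)) a ^ 2 -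
    (deriv (fun t => φ (x, t)) a - ⟪p, gradient (fun z => φ (z, a)) x⟫_ℝ) ^ 2 /
      (1 + ‖p‖ ^ 2)

/-- `|∇_G w|²` for a function of the horizontal variable only (extended vertically),
with horizontal gradient `Dw`, along the sheet with gradient `p`. -/
def tanGradVert2 (p Dw : Euc n) : ℝ :=
  ‖Dw‖ ^ 2 - ⟪p, Dw⟫_ℝ ^ 2 / (1 + ‖p‖ ^ 2)

/-- `⟨∇_G w, ∇_G φ⟩` along the sheet with gradient `p` through `(x,a)`, where `w` is the
vertical extension of a function with horizontal gradient `Dw` and `φ` is ambient. -/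
def tanGradInner (p Dw : Euc n) (φ : Euc n × ℝ → ℝ) (x : Euc n) (a : ℝ) : ℝ :=
  ⟪Dw, gradient (fun z => φ (z, a)) x⟫_ℝ +
    ⟪p, Dw⟫_ℝ * (deriv (fun t => φ (x, t)) a -
      ⟪p, gradient (fun z => φ (z, a)) x⟫_ℝ) / (1 + ‖p‖ ^ 2)

/-- The upward unit normal of the tangent plane (the graph of `⟨p, ·⟩`). -/
def graphNormal (p : Euc n) : Fin (n + 1) → ℝ :=
  Fin.snoc (fun j => -(p j) / Real.sqrt (1 + ‖p‖ ^ 2)) (1 / Real.sqrt (1 + ‖p‖ ^ 2))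

/-- The matrix of the orthogonal projection of `ℝ^{n+1}` onto the tangent plane of the
graph, i.e. the graph of the linear map `⟨p, ·⟩`. -/
def graphProj (p : Euc n) : Matrix (Fin (n + 1)) (Fin (n + 1)) ℝ :=
  Matrix.of fun i j => (if i = j then (1 : ℝ) else 0) - graphNormal p i * graphNormal p j

/-- The matrix of the orthogonal projection of `ℝ^{n+1}` onto the hyperplane with unit
normal `ν`. -/
def normalProj (ν : Euc (n + 1)) : Matrix (Fin (n + 1)) (Fin (n + 1)) ℝ :=
  Matrix.of fun i j => (if i = j then (1 : ℝ) else 0) - ν i * ν j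

/-- The closed half-hyperplane `{⟨ν,X⟩ = 0, ⟨w,X⟩ ≥ 0}`. -/
def halfPlaneSet (ν w : Euc (n + 1)) : Set (Euc (n + 1)) :=
  {X | ⟪ν, X⟫_ℝ = 0 ∧ 0 ≤ ⟪w, X⟫_ℝ}

/-- The graphs of the two-valued functions with value-derivative data `F j` converge, as
varifolds in `Ω × ℝ`, to `Σ_k m_k |S_k|`, where `S_k` are `n`-dimensional planes or
half-planes with orthogonal projection matrices `P_k`. -/
def VarifoldTendsto (Ω : Set (Euc n)) (F : ℕ → Euc n → Sym2 (ℝ × Euc n))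
    {N : ℕ} (S : Fin N → Set (Euc (n + 1)))
    (P : Fin N → Matrix (Fin (n + 1)) (Fin (n + 1)) ℝ) (m : Fin N → ℕ) : Prop :=
  ∀ f : Euc (n + 1) × Matrix (Fin (n + 1)) (Fin (n + 1)) ℝ → ℝ,
    Continuous f → HasCompactSupport f →
    tsupport f ⊆ (toE '' (Ω ×ˢ (univ : Set ℝ))) ×ˢ
      (univ : Set (Matrix (Fin (n + 1)) (Fin (n + 1)) ℝ)) →
    Tendsto (fun j => ∫ x in Ω,
        sheetSum (fun ap : ℝ × Euc n =>
          f (toE (x, ap.1), graphProj ap.2) * Real.sqrt (1 + ‖ap.2‖ ^ 2)) (F j x))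
      atTop
      (𝓝 (∑ k, (m k : ℝ) *
        ∫ X in S k ∩ toE '' (Ω ×ˢ (univ : Set ℝ)), f (X, P k) ∂μH[(n : ℝ)]))

/-! Sorting the two values, `u = {min u, max u}`. Both `min` and `max` are `1`-Lipschitz for
`𝒢`, so `min u` and `max u` are Lipschitz real functions, differentiable a.e. by the classical
Rademacher theorem (`H^n` is a Haar measure on `ℝⁿ`); wherever both are differentiable, their
gradients form a two-valued derivative of `u`. -/

theorem _root_.Sym2.mk_inf_sup {α : Type*} [LinearOrder α] (z : Sym2 α) :
    s(z.inf, z.sup) = z :=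
  Sym2.sortEquiv.left_inv z

section PairDist

variable {E : Type*} [PseudoMetricSpace E]

theorem pairDist_nonneg (z w : Sym2 E) : 0 ≤ pairDist z w :=
  Real.sInf_nonneg (by rintro r ⟨a, b, c, d, -, -, rfl⟩; positivity)

theorem pairDist_mk_le (a b c d : E) :
    pairDist s(a, b) s(c, d) ≤ dist a c + dist b d :=
  csInf_le ⟨0, by rintro r ⟨-, -, -, -, -, -, rfl⟩; positivity⟩ ⟨a, b, c, d, rfl, rfl, rfl⟩

theorem le_pairDist {z w : Sym2 E} {r : ℝ}
    (h : ∀ a b c d, z = s(a, b) → w = s(c, d) → r ≤ dist a c + dist b d) :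
    r ≤ pairDist z w := by
  induction z using Sym2.ind with | _ a b
  induction w using Sym2.ind with | _ c d
  exact le_csInf ⟨_, a, b, c, d, rfl, rfl, rfl⟩
    (by rintro r ⟨a', b', c', d', hz, hw, rfl⟩; exact h a' b' c' d' hz hw)

end PairDist

theorem dist_inf_le_pairDist (z w : Sym2 ℝ) : dist z.inf w.inf ≤ pairDist z w :=
  le_pairDist fun a b c d hz hw => by
    subst hz hw
    simp only [Sym2.inf_mk, Real.dist_eq]
    exact (abs_min_sub_min_le_max a b c d).trans
      (max_le_add_of_nonneg (abs_nonneg _) (abs_nonneg _))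

theorem dist_sup_le_pairDist (z w : Sym2 ℝ) : dist z.sup w.sup ≤ pairDist z w :=
  le_pairDist fun a b c d hz hw => by
    subst hz hw
    simp only [Sym2.sup_mk, Real.dist_eq]
    exact (abs_max_sub_max_le_max a b c d).trans
      (max_le_add_of_nonneg (abs_nonneg _) (abs_nonneg _))

theorem PairLipschitzOn.lipschitzOnWith_comp {L : ℝ} {Ω : Set (Euc n)} {u : Euc n → Sym2 ℝ}
    (hu : PairLipschitzOn L Ω u) {f : Sym2 ℝ → ℝ}
    (hf : ∀ z w, dist (f z) (f w) ≤ pairDist z w) :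
    LipschitzOnWith L.toNNReal (f ∘ u) Ω :=
  LipschitzOnWith.of_dist_le_mul fun x hx y hy =>
    calc dist (f (u x)) (f (u y)) ≤ L * dist x y := (hf _ _).trans (hu x hx y hy)
      _ ≤ L.toNNReal * dist x y := by gcongr; exact L.le_coe_toNNReal

theorem _root_.LipschitzOnWith.ae_differentiableAt_of_isOpen {E F : Type*}
    [NormedAddCommGroup E] [NormedSpace ℝ E] [FiniteDimensional ℝ E] [MeasurableSpace E]
    [BorelSpace E] [NormedAddCommGroup F] [NormedSpace ℝ F] [FiniteDimensional ℝ F]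
    (μ : Measure E) [μ.IsAddHaarMeasure] {C : ℝ≥0} {f : E → F} {s : Set E}
    (hf : LipschitzOnWith C f s) (hs : IsOpen s) :
    ∀ᵐ x ∂μ, x ∈ s → DifferentiableAt ℝ f x := by
  filter_upwards [hf.ae_differentiableWithinAt_of_mem] with x hx xs
  exact (hx xs).differentiableAt (hs.mem_nhds xs)

instance isAddHaarMeasure_hausdorffMeasure_euc :
    (μH[(n : ℝ)] : Measure (Euc n)).IsAddHaarMeasure := by
  simpa only [finrank_euclideanSpace_fin] using
    isAddHaarMeasure_hausdorffMeasure (E := Euc n)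

theorem hasTwoDerivAt_of_hasGradientAt {u : Euc n → Sym2 ℝ} {f g : Euc n → ℝ}
    {x p q : Euc n} (hu : ∀ y, u y = s(f y, g y)) (hf : HasGradientAt f p x)
    (hg : HasGradientAt g q x) :
    HasTwoDerivAt u x s((f x, p), (g x, q)) := by
  refine ⟨f x, g x, p, q, hu x, rfl, ?_⟩
  have hf' := (hasGradientAt_iff_isLittleO_nhds_zero.1 hf).norm_right
  have hg' := (hasGradientAt_iff_isLittleO_nhds_zero.1 hg).norm_right
  refine Asymptotics.IsBigO.trans_isLittleO (Asymptotics.IsBigO.of_norm_le fun h => ?_)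
    (hf'.norm_left.add hg'.norm_left)
  rw [Real.norm_of_nonneg (pairDist_nonneg _ _), hu]
  refine (pairDist_mk_le _ _ _ _).trans_eq ?_
  simp only [Real.dist_eq, Real.norm_eq_abs, sub_sub]

/-- **Rademacher's theorem for two-valued functions.** A two-valued Lipschitz function
on the unit disc `D₁ ⊂ ℝⁿ` is two-valued differentiable at `H^n`-a.e. point of `D₁`. -/
theorem rademacher_two_valued
    (n : ℕ) (u : Euc n → Sym2 ℝ) (L : ℝ)
    (hLip : PairLipschitzOn L (ball (0 : Euc n) 1) u) :
    ∀ᵐ x ∂(μH[(n : ℝ)] : Measure (Euc n)), x ∈ ball (0 : Euc n) 1 →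
      ∃ d : Sym2 (ℝ × Euc n), HasTwoDerivAt u x d := by
  have hinf := (hLip.lipschitzOnWith_comp dist_inf_le_pairDist).ae_differentiableAt_of_isOpen
    μH[(n : ℝ)] isOpen_ball
  have hsup := (hLip.lipschitzOnWith_comp dist_sup_le_pairDist).ae_differentiableAt_of_isOpen
    μH[(n : ℝ)] isOpen_ball
  filter_upwards [hinf, hsup] with x hinf_x hsup_x hx
  exact ⟨_, hasTwoDerivAt_of_hasGradientAt (fun y => (u y).mk_inf_sup.symm)
    (hinf_x hx).hasGradientAt (hsup_x hx).hasGradientAt⟩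

end TwoValued
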